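/- arXiv:2510.16535 — 3 statements merged into one kernel-verified Lean document; each statement's English description precedes it below -/
import Mathlib

section
/- Let V and W be real inner product spaces, let Vₕ ⊆ V be a subspace, let G : V →ₗ W be a linear map, and suppose the inverse inequality ‖G v‖ ≤ (C/h)·‖v‖ holds for all v ∈ Vₕ, with constants C > 0 and h > 0. Let Δt > 0 and suppose e, e' ∈ Vₕ satisfy the error equation ⟨e, v⟩ + Δt·⟨G e', G v⟩ = 0 for all v ∈ Vₕ. Then (1 - C²Δt/(2h²))·‖e‖² ≤ (C²Δt/(2h²))·‖e'‖². -/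
/-!
Testing the error equation with `v = e` gives `‖e‖² = -Δt ⟪G e', G e⟫ ≤ Δt ‖G e'‖ ‖G e‖`;
the inverse inequality bounds this by `Δt (C/h)² ‖e'‖ ‖e‖`, and `2ab ≤ a² + b²` splits the product.
-/

open scoped RealInnerProductSpace

theorem norm_sq_le_of_inner_self_add_mul_inner_eq_zero
    {V W : Type*} [NormedAddCommGroup V] [InnerProductSpace ℝ V]
    [NormedAddCommGroup W] [InnerProductSpace ℝ W]
    {x : V} {a b : W} {t : ℝ} (ht : 0 ≤ t) (h : ⟪x, x⟫ + t * ⟪a, b⟫ = 0) :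
    ‖x‖ ^ 2 ≤ t * (‖a‖ * ‖b‖) :=
  calc ‖x‖ ^ 2 = t * -⟪a, b⟫ := by rw [← real_inner_self_eq_norm_sq]; linarith
    _ ≤ t * (‖a‖ * ‖b‖) := by
      gcongr; linarith [neg_le_of_abs_le (abs_real_inner_le_norm a b)]

theorem heat_implicitization_error_estimate_general
    {V W : Type*} [NormedAddCommGroup V] [InnerProductSpace ℝ V]
    [NormedAddCommGroup W] [InnerProductSpace ℝ W]
    (Vₕ : Submodule ℝ V) (G : V →ₗ[ℝ] W)
    (C h : ℝ)
    (hinv : ∀ v ∈ Vₕ, ‖G v‖ ≤ (C / h) * ‖v‖)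
    (Δt : ℝ) (hΔt : 0 < Δt)
    (e e' : V) (he : e ∈ Vₕ) (he' : e' ∈ Vₕ)
    (herr : ∀ v ∈ Vₕ, inner ℝ e v + Δt * inner ℝ (G e') (G v) = (0 : ℝ)) :
    (1 - C ^ 2 * Δt / (2 * h ^ 2)) * ‖e‖ ^ 2 ≤
      (C ^ 2 * Δt / (2 * h ^ 2)) * ‖e'‖ ^ 2 := by
  have hGe := hinv e he
  have hGe' := hinv e' he'
  suffices ‖e‖ ^ 2 ≤ C ^ 2 * Δt / (2 * h ^ 2) * (‖e'‖ ^ 2 + ‖e‖ ^ 2) by linear_combination this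
  calc ‖e‖ ^ 2 ≤ Δt * (‖G e'‖ * ‖G e‖) :=
        norm_sq_le_of_inner_self_add_mul_inner_eq_zero hΔt.le (herr e he)
    _ ≤ Δt * ((C / h * ‖e'‖) * (C / h * ‖e‖)) := by
        gcongr; exact (norm_nonneg _).trans hGe'
    _ = Δt * (C / h) ^ 2 * (‖e'‖ * ‖e‖) := by ring
    _ ≤ Δt * (C / h) ^ 2 * ((‖e'‖ ^ 2 + ‖e‖ ^ 2) / 2) := by
        gcongr; linarith [two_mul_le_add_sq ‖e'‖ ‖e‖]
    _ = C ^ 2 * Δt / (2 * h ^ 2) * (‖e'‖ ^ 2 + ‖e‖ ^ 2) := by ring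

/-- Abstract error estimate for the implicitization iteration of
the semidiscrete heat equation: if the inverse inequality
`‖G v‖ ≤ (C/h)‖v‖` holds on `Vₕ` and `⟨e, v⟩ + Δt⟨G e', G v⟩ = 0` for all
`v ∈ Vₕ`, then `(1 - C²Δt/(2h²))‖e‖² ≤ (C²Δt/(2h²))‖e'‖²`. -/
theorem heat_implicitization_error_estimate
    {V W : Type*} [NormedAddCommGroup V] [InnerProductSpace ℝ V]
    [NormedAddCommGroup W] [InnerProductSpace ℝ W]
    (Vₕ : Submodule ℝ V) (G : V →ₗ[ℝ] W)
    (C h : ℝ) (hC : 0 < C) (hh : 0 < h)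
    (hinv : ∀ v ∈ Vₕ, ‖G v‖ ≤ (C / h) * ‖v‖)
    (Δt : ℝ) (hΔt : 0 < Δt)
    (e e' : V) (he : e ∈ Vₕ) (he' : e' ∈ Vₕ)
    (herr : ∀ v ∈ Vₕ, inner ℝ e v + Δt * inner ℝ (G e') (G v) = (0 : ℝ)) :
    (1 - C ^ 2 * Δt / (2 * h ^ 2)) * ‖e‖ ^ 2 ≤
      (C ^ 2 * Δt / (2 * h ^ 2)) * ‖e'‖ ^ 2 :=
  heat_implicitization_error_estimate_general Vₕ G C h hinv Δt hΔt e e' he he' herr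
end

section
/- Let V and W be real inner product spaces, Vₕ ⊆ V a subspace, G : V →ₗ W linear with ‖G v‖ ≤ (C/h)·‖v‖ for all v ∈ Vₕ (C > 0, h > 0). Suppose the timestep satisfies the CFL-type condition Δt ≤ h²/C², and e, e' ∈ Vₕ satisfy ⟨e, v⟩ + Δt·⟨G e', G v⟩ = 0 for all v ∈ Vₕ. Then ‖e‖ ≤ ‖e'‖. -/
/-!
Testing the error equation with `v = e` gives `‖e‖² = -Δt ⟪G e', G e⟫`. Cauchy–Schwarz and the
inverse inequality bound the right-hand side by `Δt (C/h)² ‖e'‖ ‖e‖`, and the CFL condition says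
exactly that `Δt (C/h)² ≤ 1`; dividing by `‖e‖` gives the claim.
-/

open RealInnerProductSpace

section

variable {V W : Type*} [NormedAddCommGroup V] [InnerProductSpace ℝ V]
  [NormedAddCommGroup W] [InnerProductSpace ℝ W]

theorem norm_sq_le_of_inner_self_add_smul_inner_eq_zero {x : V} {a b : W} {t : ℝ}
    (ht : 0 ≤ t) (h : ⟪x, x⟫ + t * ⟪a, b⟫ = 0) : ‖x‖ ^ 2 ≤ t * (‖a‖ * ‖b‖) := by
  have hneg : -⟪a, b⟫ ≤ ‖a‖ * ‖b‖ := by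
    simpa only [inner_neg_left, norm_neg] using real_inner_le_norm (-a) b
  rw [← real_inner_self_eq_norm_sq]
  nlinarith

theorem norm_mul_norm_le_of_norm_apply_le (G : V →ₗ[ℝ] W) {K : ℝ} {u v : V}
    (hu : ‖G u‖ ≤ K * ‖u‖) (hv : ‖G v‖ ≤ K * ‖v‖) :
    ‖G u‖ * ‖G v‖ ≤ K ^ 2 * (‖u‖ * ‖v‖) :=
  calc ‖G u‖ * ‖G v‖ ≤ (K * ‖u‖) * (K * ‖v‖) :=
        mul_le_mul hu hv (norm_nonneg _) ((norm_nonneg _).trans hu)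
    _ = K ^ 2 * (‖u‖ * ‖v‖) := by ring

theorem norm_le_of_galerkin_step (Vₕ : Submodule ℝ V) (G : V →ₗ[ℝ] W) {K t : ℝ}
    (hinv : ∀ v ∈ Vₕ, ‖G v‖ ≤ K * ‖v‖) (ht : 0 ≤ t) (hCFL : t * K ^ 2 ≤ 1)
    {e e' : V} (he : e ∈ Vₕ) (he' : e' ∈ Vₕ)
    (herr : ∀ v ∈ Vₕ, ⟪e, v⟫ + t * ⟪G e', G v⟫ = 0) :
    ‖e‖ ≤ ‖e'‖ := by
  rcases (norm_nonneg e).eq_or_lt with he0 | hepos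
  · exact he0 ▸ norm_nonneg e'
  have hsq : ‖e‖ * ‖e‖ ≤ ‖e'‖ * ‖e‖ :=
    calc ‖e‖ * ‖e‖ = ‖e‖ ^ 2 := (sq _).symm
      _ ≤ t * (‖G e'‖ * ‖G e‖) :=
        norm_sq_le_of_inner_self_add_smul_inner_eq_zero ht (herr e he)
      _ ≤ t * (K ^ 2 * (‖e'‖ * ‖e‖)) :=
        mul_le_mul_of_nonneg_left
          (norm_mul_norm_le_of_norm_apply_le G (hinv e' he') (hinv e he)) ht
      _ = (t * K ^ 2) * (‖e'‖ * ‖e‖) := by ring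
      _ ≤ ‖e'‖ * ‖e‖ :=
        mul_le_of_le_one_left (by positivity) hCFL
  exact le_of_mul_le_mul_right hsq hepos

end

theorem mul_div_sq_le_one_of_le_sq_div_sq {t C h : ℝ} (hCFL : t ≤ h ^ 2 / C ^ 2) :
    t * (C / h) ^ 2 ≤ 1 := by
  rw [← inv_div, inv_pow]
  exact mul_inv_le_one_of_le₀ (by rwa [div_pow]) (sq_nonneg _)

theorem heat_implicitization_error_nonincreasing_general
    {V W : Type*} [NormedAddCommGroup V] [InnerProductSpace ℝ V]
    [NormedAddCommGroup W] [InnerProductSpace ℝ W]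
    (Vₕ : Submodule ℝ V) (G : V →ₗ[ℝ] W)
    (C h : ℝ)
    (hinv : ∀ v ∈ Vₕ, ‖G v‖ ≤ (C / h) * ‖v‖)
    (Δt : ℝ) (hΔt : 0 < Δt) (hCFL : Δt ≤ h ^ 2 / C ^ 2)
    (e e' : V) (he : e ∈ Vₕ) (he' : e' ∈ Vₕ)
    (herr : ∀ v ∈ Vₕ, inner ℝ e v + Δt * inner ℝ (G e') (G v) = (0 : ℝ)) :
    ‖e‖ ≤ ‖e'‖ :=
  norm_le_of_galerkin_step Vₕ G hinv hΔt.le (mul_div_sq_le_one_of_le_sq_div_sq hCFL) he he' herr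

/-- Under the CFL-type condition `Δt ≤ h²/C²`, the
implicitization iteration errors for the semidiscrete heat equation are
non-increasing: `‖e‖ ≤ ‖e'‖`. -/
theorem heat_implicitization_error_nonincreasing
    {V W : Type*} [NormedAddCommGroup V] [InnerProductSpace ℝ V]
    [NormedAddCommGroup W] [InnerProductSpace ℝ W]
    (Vₕ : Submodule ℝ V) (G : V →ₗ[ℝ] W)
    (C h : ℝ) (hC : 0 < C) (hh : 0 < h)
    (hinv : ∀ v ∈ Vₕ, ‖G v‖ ≤ (C / h) * ‖v‖)
    (Δt : ℝ) (hΔt : 0 < Δt) (hCFL : Δt ≤ h ^ 2 / C ^ 2)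
    (e e' : V) (he : e ∈ Vₕ) (he' : e' ∈ Vₕ)
    (herr : ∀ v ∈ Vₕ, inner ℝ e v + Δt * inner ℝ (G e') (G v) = (0 : ℝ)) :
    ‖e‖ ≤ ‖e'‖ :=
  heat_implicitization_error_nonincreasing_general Vₕ G C h hinv Δt hΔt hCFL e e' he he' herr
end

section
/- Let V and W be real inner product spaces, Vₕ ⊆ V a finite-dimensional subspace, G : V →ₗ W linear with ‖G v‖ ≤ (C/h)·‖v‖ for all v ∈ Vₕ (C > 0, h > 0), and let Δt > 0 satisfy Δt < h²/C². Let (eℓ)ℓ∈ℕ be a sequence in Vₕ such that ⟨e_{ℓ+1}, v⟩ + Δt·⟨G e_ℓ, G v⟩ = 0 for all v ∈ Vₕ and all ℓ. Then eℓ → 0 as ℓ → ∞. -/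
/-!
Testing the error equation with `v = e (ℓ + 1)` and using Cauchy–Schwarz together with the
inverse inequality gives `‖e (ℓ + 1)‖² ≤ Δt (C/h)² ‖e ℓ‖ ‖e (ℓ + 1)‖`, so the errors contract
by the factor `Δt (C/h)²`, which the CFL condition makes `< 1`.
-/

open Filter Topology

section

variable {V W : Type*} [NormedAddCommGroup V] [InnerProductSpace ℝ V]
  [NormedAddCommGroup W] [InnerProductSpace ℝ W]

theorem norm_le_of_inner_self_add_inner_eq_zero (G : V →ₗ[ℝ] W) {x y : V} {K τ : ℝ}
    (hτ : 0 ≤ τ) (hGx : ‖G x‖ ≤ K * ‖x‖) (hGy : ‖G y‖ ≤ K * ‖y‖)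
    (hxy : inner ℝ y y + τ * inner ℝ (G x) (G y) = 0) :
    ‖y‖ ≤ τ * K ^ 2 * ‖x‖ := by
  have hGG : ‖G x‖ * ‖G y‖ ≤ K * ‖x‖ * (K * ‖y‖) :=
    mul_le_mul hGx hGy (norm_nonneg _) ((norm_nonneg _).trans hGx)
  have hsq : ‖y‖ * ‖y‖ ≤ τ * K ^ 2 * ‖x‖ * ‖y‖ :=
    calc ‖y‖ * ‖y‖ = -(τ * inner ℝ (G x) (G y)) := by
          rw [← real_inner_self_eq_norm_mul_norm]; linarith
      _ ≤ τ * (‖G x‖ * ‖G y‖) := by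
          rw [← mul_neg]; gcongr; exact (neg_le_abs _).trans (abs_real_inner_le_norm _ _)
      _ ≤ τ * (K * ‖x‖ * (K * ‖y‖)) := by gcongr
      _ = τ * K ^ 2 * ‖x‖ * ‖y‖ := by ring
  rcases (norm_nonneg y).eq_or_lt with hy | hy
  · rw [← hy]; positivity
  · exact le_of_mul_le_mul_right hsq hy

end

theorem mul_div_sq_lt_one_of_lt_sq_div_sq {τ C h : ℝ} (hτ : 0 < τ) (hCFL : τ < h ^ 2 / C ^ 2) :
    τ * (C / h) ^ 2 < 1 := by
  have hpos : 0 < h ^ 2 / C ^ 2 := hτ.trans hCFL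
  rwa [← inv_div, inv_pow, div_pow, ← div_eq_mul_inv, div_lt_one hpos]

theorem tendsto_zero_of_norm_succ_le_mul {E : Type*} [SeminormedAddCommGroup E] {u : ℕ → E}
    {q : ℝ} (hq₀ : 0 ≤ q) (hq₁ : q < 1) (hu : ∀ n, ‖u (n + 1)‖ ≤ q * ‖u n‖) :
    Tendsto u atTop (𝓝 0) := by
  rw [tendsto_zero_iff_norm_tendsto_zero]
  refine squeeze_zero (fun _ ↦ norm_nonneg _)
    (fun n ↦ le_geom (u := (‖u ·‖)) hq₀ n fun k _ ↦ hu k) ?_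
  simpa using (tendsto_pow_atTop_nhds_zero_of_lt_one hq₀ hq₁).mul_const ‖u 0‖

theorem heat_implicitization_errors_tendsto_zero_general
    {V W : Type*} [NormedAddCommGroup V] [InnerProductSpace ℝ V]
    [NormedAddCommGroup W] [InnerProductSpace ℝ W]
    (Vₕ : Submodule ℝ V) (G : V →ₗ[ℝ] W)
    (C h : ℝ)
    (hinv : ∀ v ∈ Vₕ, ‖G v‖ ≤ (C / h) * ‖v‖)
    (Δt : ℝ) (hΔt : 0 < Δt) (hCFL : Δt < h ^ 2 / C ^ 2)
    (e : ℕ → V) (he : ∀ ℓ, e ℓ ∈ Vₕ)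
    (herr : ∀ ℓ, ∀ v ∈ Vₕ,
      inner ℝ (e (ℓ + 1)) v + Δt * inner ℝ (G (e ℓ)) (G v) = (0 : ℝ)) :
    Filter.Tendsto e Filter.atTop (nhds 0) :=
  tendsto_zero_of_norm_succ_le_mul (by positivity) (mul_div_sq_lt_one_of_lt_sq_div_sq hΔt hCFL)
    fun ℓ ↦ norm_le_of_inner_self_add_inner_eq_zero G hΔt.le (hinv _ (he ℓ))
      (hinv _ (he (ℓ + 1))) (herr ℓ _ (he (ℓ + 1)))

/-- Under the strict CFL-type condition `Δt < h²/C²`, the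
implicitization iteration errors for the semidiscrete heat equation converge
to zero. -/
theorem heat_implicitization_errors_tendsto_zero
    {V W : Type*} [NormedAddCommGroup V] [InnerProductSpace ℝ V]
    [NormedAddCommGroup W] [InnerProductSpace ℝ W]
    (Vₕ : Submodule ℝ V) [FiniteDimensional ℝ Vₕ] (G : V →ₗ[ℝ] W)
    (C h : ℝ) (hC : 0 < C) (hh : 0 < h)
    (hinv : ∀ v ∈ Vₕ, ‖G v‖ ≤ (C / h) * ‖v‖)
    (Δt : ℝ) (hΔt : 0 < Δt) (hCFL : Δt < h ^ 2 / C ^ 2)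
    (e : ℕ → V) (he : ∀ ℓ, e ℓ ∈ Vₕ)
    (herr : ∀ ℓ, ∀ v ∈ Vₕ,
      inner ℝ (e (ℓ + 1)) v + Δt * inner ℝ (G (e ℓ)) (G v) = (0 : ℝ)) :
    Filter.Tendsto e Filter.atTop (nhds 0) :=
  heat_implicitization_errors_tendsto_zero_general Vₕ G C h hinv Δt hΔt hCFL e he herr
end
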